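/- In the triangle group T_d = ⟨a,b,c ∣ a², b², c², (ab)³, (ac)², (bc)^d⟩, the subgroup generated by a and b is isomorphic to the dihedral group of order 6, i.e. ⟨a,b⟩ ≅ ⟨x,y ∣ x², y², (xy)³⟩. -/

import Mathlib

/-!
The relations `a² = b² = (ab)³ = 1` give a homomorphism from the dihedral group `D₃` onto
`⟨a, b⟩`. Every nontrivial normal subgroup of `D₃` contains the rotations, so this map is
injective as soon as `ab ≠ 1`. That is witnessed in `PGL₂(ℤ/d)`, where `a, b, c` act on the
projective line by `z ↦ 1/z`, `z ↦ 1 - z`, `z ↦ -z`, and `ab` survives because `d ≠ 1`.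
-/

/-- Relators of the triangle group
`T_d = ⟨a,b,c ∣ a², b², c², (ab)³, (ac)², (bc)^d⟩`,
with `a = of 0`, `b = of 1`, `c = of 2`. -/
def triRels (d : ℕ) : Set (FreeGroup (Fin 3)) :=
  {(FreeGroup.of 0)^2, (FreeGroup.of 1)^2, (FreeGroup.of 2)^2,
   (FreeGroup.of 0 * FreeGroup.of 1)^3, (FreeGroup.of 0 * FreeGroup.of 2)^2,
   (FreeGroup.of 1 * FreeGroup.of 2)^d}

abbrev T (d : ℕ) := PresentedGroup (triRels d)

section

variable {G : Type*} [Group G] {n : ℕ} {x : G}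

lemma zpow_zmodCast_add (hx : x ^ n = 1) (i j : ZMod n) :
    x ^ (ZMod.cast (i + j) : ℤ) = x ^ ((ZMod.cast i : ℤ) + ZMod.cast j) := by
  rw [ZMod.intCast_cast_add, ← zpow_eq_zpow_emod' _ hx]

lemma zpow_zmodCast_sub (hx : x ^ n = 1) (i j : ZMod n) :
    x ^ (ZMod.cast (i - j) : ℤ) = x ^ ((ZMod.cast i : ℤ) - ZMod.cast j) := by
  rw [ZMod.intCast_cast_sub, ← zpow_eq_zpow_emod' _ hx]

lemma zpow_mul_eq_mul_zpow_neg_of_conj_eq_inv {s : G} (hs : s ^ 2 = 1) (hsx : s * x * s = x⁻¹)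
    (k : ℤ) : x ^ k * s = s * x ^ (-k) := by
  have hs' : s⁻¹ = s := inv_eq_of_mul_eq_one_right (by rwa [← sq])
  have hconj : s * x ^ k * s = x ^ (-k) := by
    have := conj_zpow (a := s) (b := x) (i := k)
    rw [hs', hsx, inv_zpow'] at this
    exact this.symm
  rw [← hconj, ← mul_assoc, ← mul_assoc, ← sq, hs, one_mul]

end

namespace DihedralGroup

variable {n : ℕ} {G : Type*} [Group G] {s t : G}

def lift (hs : s ^ 2 = 1) (ht : t ^ 2 = 1) (hst : (s * t) ^ n = 1) : DihedralGroup n →* G where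
  toFun
    | r i => (s * t) ^ (ZMod.cast i : ℤ)
    | sr i => s * (s * t) ^ (ZMod.cast i : ℤ)
  map_one' := by
    rw [one_def]
    show (s * t) ^ (ZMod.cast (0 : ZMod n) : ℤ) = 1
    simp
  map_mul' := by
    have hconj : s * (s * t) * s = (s * t)⁻¹ := by
      rw [mul_inv_rev, inv_eq_of_mul_eq_one_right (a := t) (by rwa [← sq]),
        inv_eq_of_mul_eq_one_right (a := s) (by rwa [← sq]), ← mul_assoc, ← sq, hs, one_mul]
    have hcomm := zpow_mul_eq_mul_zpow_neg_of_conj_eq_inv hs hconj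
    rintro (i | i) (j | j)
    · simp only [r_mul_r, zpow_zmodCast_add hst, zpow_add]
    · simp only [r_mul_sr, zpow_zmodCast_sub hst]
      rw [← mul_assoc, hcomm, mul_assoc, ← zpow_add, neg_add_eq_sub]
    · simp only [sr_mul_r, zpow_zmodCast_add hst, zpow_add, mul_assoc]
    · simp only [sr_mul_sr, zpow_zmodCast_sub hst]
      rw [mul_assoc s, ← mul_assoc _ s, hcomm, ← mul_assoc, ← mul_assoc, ← sq, hs, one_mul,
        ← zpow_add, neg_add_eq_sub]

section

variable (hs : s ^ 2 = 1) (ht : t ^ 2 = 1) (hst : (s * t) ^ n = 1)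

lemma lift_sr_zero : lift hs ht hst (sr 0) = s := by
  show s * (s * t) ^ (ZMod.cast (0 : ZMod n) : ℤ) = s
  simp

lemma lift_sr_one : lift hs ht hst (sr 1) = t := by
  show s * (s * t) ^ (ZMod.cast (1 : ZMod n) : ℤ) = t
  rw [← Int.cast_one, ZMod.coe_intCast, ← zpow_eq_zpow_emod' _ hst, zpow_one, ← mul_assoc, ← sq,
    hs, one_mul]

lemma lift_r_one : lift hs ht hst (r 1) = s * t := by
  rw [← sub_zero (1 : ZMod n), ← sr_mul_sr, map_mul, lift_sr_zero, lift_sr_one]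

lemma range_lift : (lift hs ht hst).range = Subgroup.closure {s, t} := by
  apply le_antisymm
  · have hs_mem : s ∈ Subgroup.closure {s, t} := Subgroup.subset_closure (by simp)
    have ht_mem : t ∈ Subgroup.closure {s, t} := Subgroup.subset_closure (by simp)
    rintro _ ⟨i | i, rfl⟩
    · exact Subgroup.zpow_mem _ (mul_mem hs_mem ht_mem) _
    · exact mul_mem hs_mem (Subgroup.zpow_mem _ (mul_mem hs_mem ht_mem) _)
  · rw [Subgroup.closure_le]
    rintro _ (rfl | rfl)
    exacts [⟨sr 0, lift_sr_zero hs ht hst⟩, ⟨sr 1, lift_sr_one hs ht hst⟩]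

end

lemma injective_of_map_r_one_ne_one {G : Type*} [Group G] {f : DihedralGroup 3 →* G}
    (hf : f (r 1) ≠ 1) : Function.Injective f := by
  have r_one_mem_normalClosure : ∀ x : DihedralGroup 3, x ≠ 1 →
      ∃ g h : DihedralGroup 3, r 1 = g * x * g⁻¹ * (h * x * h⁻¹) := by decide
  refine (injective_iff_map_eq_one f).mpr fun x hx => ?_
  by_contra hne
  obtain ⟨g, h, hr⟩ := r_one_mem_normalClosure x hne
  have hker := f.normal_ker.conj_mem x (f.mem_ker.mpr hx)
  exact hf (f.mem_ker.mp (hr ▸ mul_mem (hker g) (hker h)))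

end DihedralGroup

lemma Matrix.unitriangular_fin_two_pow {R : Type*} [Semiring R] (a : R) (n : ℕ) :
    !![1, a; 0, 1] ^ n = !![1, n * a; 0, 1] := by
  induction n with
  | zero => simp [Matrix.one_fin_two]
  | succ n ih => simp [pow_succ, ih, add_mul, add_comm]

lemma Units.neg_one_mem_center {M : Type*} [Monoid M] [HasDistribNeg M] :
    (-1 : Mˣ) ∈ Subgroup.center Mˣ :=
  Subgroup.mem_center_iff.mpr fun g => by simp

abbrev PGL2 (R : Type*) [CommRing R] := GL (Fin 2) R ⧸ Subgroup.center (GL (Fin 2) R)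

namespace T

variable (d : ℕ)

lemma of_zero_sq : (PresentedGroup.of 0 : T d) ^ 2 = 1 :=
  (map_pow _ _ _).symm.trans (PresentedGroup.one_of_mem (by simp [triRels]))

lemma of_one_sq : (PresentedGroup.of 1 : T d) ^ 2 = 1 :=
  (map_pow _ _ _).symm.trans (PresentedGroup.one_of_mem (by simp [triRels]))

lemma of_zero_mul_of_one_pow_three :
    (PresentedGroup.of 0 * PresentedGroup.of 1 : T d) ^ 3 = 1 := by
  rw [← PresentedGroup.one_of_mem (rels := triRels d) (x := (FreeGroup.of 0 * FreeGroup.of 1) ^ 3)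
    (by simp [triRels]), map_pow, map_mul]
  rfl

-- `z ↦ 1/z`, `z ↦ 1 - z`, `z ↦ -z` as Möbius transformations of `ℙ¹(ℤ/d)`, so that `bc` is the
-- translation `z ↦ z + 1` and `ab` is `z ↦ 1/(1 - z)`, of order `3`.
def reflA : GL (Fin 2) (ZMod d) :=
  ⟨!![0, 1; 1, 0], !![0, 1; 1, 0], by simp [Matrix.one_fin_two], by simp [Matrix.one_fin_two]⟩

def reflB : GL (Fin 2) (ZMod d) :=
  ⟨!![-1, 1; 0, 1], !![-1, 1; 0, 1], by simp [Matrix.one_fin_two], by simp [Matrix.one_fin_two]⟩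

def reflC : GL (Fin 2) (ZMod d) :=
  ⟨!![-1, 0; 0, 1], !![-1, 0; 0, 1], by simp [Matrix.one_fin_two], by simp [Matrix.one_fin_two]⟩

lemma reflA_sq : reflA d ^ 2 = 1 := by ext : 1; simp [reflA, sq, Matrix.one_fin_two]

lemma reflB_sq : reflB d ^ 2 = 1 := by ext : 1; simp [reflB, sq, Matrix.one_fin_two]

lemma reflC_sq : reflC d ^ 2 = 1 := by ext : 1; simp [reflC, sq, Matrix.one_fin_two]

lemma reflA_mul_reflB_pow_three : (reflA d * reflB d) ^ 3 = -1 := by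
  ext : 1; simp [reflA, reflB, pow_succ, Matrix.one_fin_two]

lemma reflA_mul_reflC_sq : (reflA d * reflC d) ^ 2 = -1 := by
  ext : 1; simp [reflA, reflC, sq, Matrix.one_fin_two]

lemma reflB_mul_reflC_pow : (reflB d * reflC d) ^ d = 1 := by
  ext : 1
  rw [Units.val_pow_eq_pow_val, Units.val_mul]
  simp [reflB, reflC, Matrix.unitriangular_fin_two_pow, Matrix.one_fin_two]

def gens : Fin 3 → PGL2 (ZMod d) :=
  fun i => (![reflA d, reflB d, reflC d] i : GL (Fin 2) (ZMod d))

lemma lift_gens_triRels : ∀ r ∈ triRels d, FreeGroup.lift (gens d) r = 1 := by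
  rintro r (rfl | rfl | rfl | rfl | rfl | rfl) <;>
    simp only [map_pow, map_mul, FreeGroup.lift_apply_of, gens, ← QuotientGroup.mk_mul,
      ← QuotientGroup.mk_pow, QuotientGroup.eq_one_iff] <;>
    simp [reflA_sq, reflB_sq, reflC_sq, reflA_mul_reflB_pow_three, reflA_mul_reflC_sq,
      reflB_mul_reflC_pow, Units.neg_one_mem_center]

def toPGL2 : T d →* PGL2 (ZMod d) := PresentedGroup.toGroup (lift_gens_triRels d)

lemma toPGL2_of_zero_mul_of_one_ne_one (hd : d ≠ 1) :
    toPGL2 d (PresentedGroup.of 0 * PresentedGroup.of 1) ≠ 1 := by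
  have := ZMod.nontrivial_iff.mpr hd
  rw [map_mul, toPGL2, PresentedGroup.toGroup.of, PresentedGroup.toGroup.of]
  simp only [gens, ← QuotientGroup.mk_mul, ne_eq, QuotientGroup.eq_one_iff,
    Subgroup.mem_center_iff, not_forall]
  refine ⟨reflA d, fun h => ?_⟩
  have := congrArg (fun g : GL (Fin 2) (ZMod d) => (g : Matrix (Fin 2) (Fin 2) (ZMod d)) 0 1) h
  simp [reflA, reflB] at this

end T

/-- In the triangle group `T_d` (`d ≥ 3`), the subgroup generated
by `a` and `b` is isomorphic to the dihedral group of order 6,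
i.e. `⟨x,y ∣ x², y², (xy)³⟩`. -/
theorem subgroup_ab_iso_dihedral (d : ℕ) (hd : 3 ≤ d) :
    Nonempty
      (↥(Subgroup.closure ({PresentedGroup.of 0, PresentedGroup.of 1} : Set (T d)))
        ≃* DihedralGroup 3) := by
  have ha := T.of_zero_sq d
  have hb := T.of_one_sq d
  have hab := T.of_zero_mul_of_one_pow_three d
  have hφ : Function.Injective (DihedralGroup.lift ha hb hab) := by
    refine DihedralGroup.injective_of_map_r_one_ne_one ?_
    rw [DihedralGroup.lift_r_one]
    exact fun h => T.toPGL2_of_zero_mul_of_one_ne_one d (by omega) (by rw [h, map_one])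
  exact ⟨((MonoidHom.ofInjective hφ).trans
    (MulEquiv.subgroupCongr (DihedralGroup.range_lift ha hb hab))).symm⟩
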